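/- arXiv:2206.11196 — 4 statements merged into one kernel-verified Lean document; each statement's English description precedes it below -/
import Mathlib

section
/- With the notation of the partial cofibrant dg resolution A_J of a graded quadratic monomial algebra A = kQ/⟨I⟩: the map d' defined on generators by d'([α]) = 0 for α ∈ Q_1 and d'([α_1⋯α_n]) = Σ_{i=1}^{n−1} (−1)^{|[α_1⋯α_i]|} [α_1⋯α_i][α_{i+1}⋯α_n], extended as a graded derivation, satisfies d'∘d' = 0, so A_J is a well-defined dg algebra. -/
universe w

/-- A graded quiver with a set of quadratic monomial relations: the data `(Q, I)`
presenting a graded quadratic monomial algebra `A = kQ/⟨I⟩` (viewed as a dg algebra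
with zero differential).  `rel a b` means that the length-two path `ab` lies in `I`;
`deg` is the grading of the arrows. -/
structure QuadData : Type (w + 1) where
  V : Type w
  E : Type w
  src : E → V
  tgt : E → V
  deg : E → ℤ
  rel : E → E → Prop
  rel_comp : ∀ a b, rel a b → tgt a = src b

namespace QuadData

variable (Q : QuadData)

/-- A list of arrows is composable (i.e. is a path). -/
def Composable (l : List Q.E) : Prop := l.Chain' fun a b => Q.tgt a = Q.src b

/-- No two consecutive arrows of the path form a relation. -/
def AvoidsRel (l : List Q.E) : Prop := l.Chain' fun a b => ¬ Q.rel a b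

/-- All consecutive pairs of arrows of the path are relations. -/
def AllRel (l : List Q.E) : Prop := l.Chain' fun a b => Q.rel a b

end QuadData

namespace QuadData

variable (Q : QuadData)

variable (k : Type) [Field k]

/-- Formal words in the new arrows `[α₁ ⋯ αₙ]` of the partial resolution `A_J`:
a word is a list of "chunks", each chunk being (the list of letters of) one new
arrow. -/
abbrev Word := List (List Q.E)

/-- The basis labels of `A_J`: trivial paths at vertices, and words. -/
abbrev WBasis := Q.V ⊕ Q.Word

/-- The underlying `k`-module of `A_J`, as a free module on basis labels. -/
abbrev WMod := Q.WBasis →₀ k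

/-- Degree of a new arrow `[α₁ ⋯ αₙ]`: `Σ |αᵢ| - n + 1`. -/
def cdeg (c : List Q.E) : ℤ := (c.map Q.deg).sum - c.length + 1

/-- The differential `d'` applied to a basis word, defined on generators by
`d'([α₁ ⋯ αₙ]) = Σᵢ (-1) ^ |[α₁ ⋯ αᵢ]| [α₁ ⋯ αᵢ][αᵢ₊₁ ⋯ αₙ]` and extended to words
(products of generators) by the graded Leibniz rule. -/
noncomputable def dWord (w : Q.Word) : Q.WMod k :=
  ∑ j ∈ Finset.range w.length, ∑ i ∈ Finset.Ioo 0 (w.getD j []).length,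
    ((-1 : k) ^ (((w.take j).map Q.cdeg).sum + Q.cdeg ((w.getD j []).take i))) •
      Finsupp.single
        (Sum.inr (w.take j ++ [(w.getD j []).take i, (w.getD j []).drop i] ++ w.drop (j + 1)))
        1

/-- The differential `d'` of `A_J` as a `k`-linear endomorphism. -/
noncomputable def Dmap : Q.WMod k →ₗ[k] Q.WMod k :=
  Finsupp.lift (Q.WMod k) k (Q.WBasis)
    (fun b => Sum.rec (fun _ => 0) (fun w => Q.dWord k w) b)

variable {k}
variable (J : Q.E → Q.E → Prop)

/-- A chunk is a genuine new arrow of `A_J`: a nonempty path all of whose consecutive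
pairs lie in `J`. -/
def ChunkOK (c : List Q.E) : Prop := c ≠ [] ∧ c.Chain' J

/-- Composability at the junction of two chunks. -/
def JComposable (c c' : List Q.E) : Prop :=
  ∀ a ∈ c.getLast?, ∀ b ∈ c'.head?, Q.tgt a = Q.src b

/-- The junction of two chunks is not a relation of `I' = I ∖ J`. -/
def JNotRel (c c' : List Q.E) : Prop :=
  ∀ a ∈ c.getLast?, ∀ b ∈ c'.head?, ¬ (Q.rel a b ∧ ¬ J a b)

/-- A word is a basis element of `A_J`: a nonempty composable sequence of genuine
new arrows, avoiding the relations `I' = I ∖ J`. -/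
def WordOK (w : Q.Word) : Prop :=
  w ≠ [] ∧ (∀ c ∈ w, Q.ChunkOK J c) ∧
    w.Chain' fun c c' => Q.JComposable c c' ∧ Q.JNotRel J c c'

def BasisOK : Q.WBasis → Prop := Sum.rec (fun _ => True) (Q.WordOK J)

variable (k)

/-- The underlying `k`-module of `A_J`: the span of the genuine basis elements. -/
noncomputable def WSub : Submodule k (Q.WMod k) :=
  Submodule.span k {x | ∃ b, Q.BasisOK J b ∧ x = Finsupp.single b 1}

/-- Basis labels of `A = kQ/⟨I⟩`: trivial paths and paths of arrows. -/
abbrev ABasis := Q.V ⊕ List Q.E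

abbrev AMod := Q.ABasis →₀ k

variable {k}

def APathOK : Q.ABasis → Prop :=
  Sum.rec (fun _ => True) (fun l => l ≠ [] ∧ Q.Composable l ∧ Q.AvoidsRel l)

variable (k)

/-- The underlying `k`-module of `A`: the span of the relation-avoiding paths. -/
noncomputable def ASub : Submodule k (Q.AMod k) :=
  Submodule.span k {x | ∃ b, Q.APathOK b ∧ x = Finsupp.single b 1}

open scoped Classical in
/-- The canonical map `φ : A_J → A` on basis elements: a vertex goes to the
corresponding trivial path, a word all of whose chunks are single arrows goes to the
corresponding path of `A` (which is zero in `A` if it passes through a relation),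
and any word containing a longer chunk `[α₁ ⋯ αₙ]`, `n ≥ 2`, goes to `0`. -/
noncomputable def phiFun : Q.WBasis → Q.AMod k
  | .inl v => Finsupp.single (Sum.inl v) 1
  | .inr w =>
      @ite _ ((∀ c ∈ w, c.length = 1) ∧ w ≠ [] ∧ Q.Composable w.flatten ∧ Q.AvoidsRel w.flatten)
        (Classical.propDecidable _) (Finsupp.single (Sum.inr w.flatten) 1) 0

noncomputable def phi : Q.WMod k →ₗ[k] Q.AMod k :=
  Finsupp.lift (Q.AMod k) k (Q.WBasis) (Q.phiFun k)

def wordSrc (w : Q.Word) : Option Q.V := do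
  let c ← w.head?
  let a ← c.head?
  pure (Q.src a)

def wordTgt (w : Q.Word) : Option Q.V := do
  let c ← w.getLast?
  let a ← c.getLast?
  pure (Q.tgt a)

open scoped Classical in
/-- Multiplication of `A_J` on basis elements. -/
noncomputable def wmulFun : Q.WBasis → Q.WBasis → Q.WMod k
  | .inl v, .inl w => if v = w then Finsupp.single (Sum.inl v) (1 : k) else 0
  | .inl v, .inr w => if Q.wordSrc w = some v then Finsupp.single (Sum.inr w) (1 : k) else 0
  | .inr w, .inl v => if Q.wordTgt w = some v then Finsupp.single (Sum.inr w) (1 : k) else 0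
  | .inr w, .inr w' =>
      if w ≠ [] ∧ w' ≠ [] ∧ Q.JComposable (w.getLast?.getD []) (w'.head?.getD []) ∧
          Q.JNotRel J (w.getLast?.getD []) (w'.head?.getD [])
      then Finsupp.single (Sum.inr (w ++ w')) (1 : k) else 0

noncomputable def wmul : Q.WMod k →ₗ[k] Q.WMod k →ₗ[k] Q.WMod k :=
  Finsupp.lift (Q.WMod k →ₗ[k] Q.WMod k) k (Q.WBasis)
    (fun b => Finsupp.lift (Q.WMod k) k (Q.WBasis) (fun b' => Q.wmulFun k J b b'))

open scoped Classical in
/-- Multiplication of `A = kQ/⟨I⟩` on basis elements. -/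
noncomputable def amulFun : Q.ABasis → Q.ABasis → Q.AMod k
  | .inl v, .inl w => if v = w then Finsupp.single (Sum.inl v) (1 : k) else 0
  | .inl v, .inr l => if l.head?.map Q.src = some v then Finsupp.single (Sum.inr l) (1 : k) else 0
  | .inr l, .inl v => if l.getLast?.map Q.tgt = some v then Finsupp.single (Sum.inr l) (1 : k) else 0
  | .inr l, .inr l' =>
      if l ≠ [] ∧ l' ≠ [] ∧
          (∀ a ∈ l.getLast?, ∀ b ∈ l'.head?, Q.tgt a = Q.src b ∧ ¬ Q.rel a b)
      then Finsupp.single (Sum.inr (l ++ l')) (1 : k) else 0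

noncomputable def amul : Q.AMod k →ₗ[k] Q.AMod k →ₗ[k] Q.AMod k :=
  Finsupp.lift (Q.AMod k →ₗ[k] Q.AMod k) k (Q.ABasis)
    (fun b => Finsupp.lift (Q.AMod k) k (Q.ABasis) (fun b' => Q.amulFun k b b'))

end QuadData

/-!
`d'` sends a word to the signed sum of the words obtained by cutting one of its chunks in
two, so `d'(d'(w))` is a signed sum over ordered pairs of cuts. Performing the same two cuts
in the opposite order gives the same word, with the opposite sign: since
`|[α₁ ⋯ αᵢ]| + |[αᵢ₊₁ ⋯ αₙ]| = |[α₁ ⋯ αₙ]| + 1`, a cut raises by one the exponent of every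
later cut and leaves that of every earlier cut unchanged. So the terms cancel in pairs.
`d'` preserves the span of the genuine words because a new junction inside a chunk lies in
`J ⊆ I`: it is composable and not a relation of `I ∖ J`.
-/

theorem Nat.lt_or_eq_or_eq_succ_or_exists_lt_eq_succ (j j' : ℕ) :
    j' < j ∨ j' = j ∨ j' = j + 1 ∨ ∃ m, j < m ∧ j' = m + 1 := by
  rcases Nat.lt_or_ge (j + 1) j' with h | h
  · exact Or.inr <| Or.inr <| Or.inr ⟨j' - 1, by omega, by omega⟩
  · have : j' < j ∨ j' = j ∨ j' = j + 1 := by omega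
    tauto

theorem neg_one_zpow_smul_add_neg_one_zpow_add_one_smul {R M : Type*} [DivisionRing R]
    [AddCommGroup M] [Module R M] (e : ℤ) (v : M) :
    (-1 : R) ^ e • v + (-1 : R) ^ (e + 1) • v = 0 := by
  rw [zpow_add_one₀ (neg_ne_zero.mpr one_ne_zero), mul_neg_one, neg_smul, add_neg_cancel]

theorem List.IsChain.append_cons_cons_of_append_cons {α : Type*} {R : α → α → Prop}
    {l₁ l₂ : List α} {a b c : α} (h : (l₁ ++ a :: l₂).IsChain R)
    (hb : ∀ x ∈ l₁.getLast?, R x a → R x b) (hc : ∀ y ∈ l₂.head?, R a y → R c y)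
    (hbc : R b c) : (l₁ ++ b :: c :: l₂).IsChain R := by
  obtain ⟨h₁, h₂, h₃⟩ := List.isChain_append.mp h
  obtain ⟨ha, h₂⟩ := List.isChain_cons.mp h₂
  refine List.isChain_append.mpr ⟨h₁, ?_, fun x hx y hy => ?_⟩
  · exact List.isChain_cons_cons.mpr
      ⟨hbc, List.isChain_cons.mpr ⟨fun y hy => hc y hy (ha y hy), h₂⟩⟩
  · obtain rfl : y = b := by simpa using hy.symm
    exact hb x hx (h₃ x hx a rfl)

namespace QuadData

variable (Q : QuadData)

def splitChunk (w : Q.Word) (j i : ℕ) : Q.Word :=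
  w.take j ++ [(w.getD j []).take i, (w.getD j []).drop i] ++ w.drop (j + 1)

def prefixDeg (w : Q.Word) (j : ℕ) : ℤ := ((w.take j).map Q.cdeg).sum

/-- The exponent `|[α₁ ⋯ αᵢ]|` of the sign in `d'`, shifted by the degrees of the chunks
passed by the Leibniz rule. -/
def splitExp (w : Q.Word) (j i : ℕ) : ℤ := Q.prefixDeg w j + Q.cdeg ((w.getD j []).take i)

theorem dWord_eq_sum (k : Type) [Field k] (w : Q.Word) :
    Q.dWord k w = ∑ j ∈ Finset.range w.length, ∑ i ∈ Finset.Ioo 0 (w.getD j []).length,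
      (-1 : k) ^ Q.splitExp w j i • Finsupp.single (Sum.inr (Q.splitChunk w j i)) 1 :=
  rfl

theorem cdeg_append (a b : List Q.E) : Q.cdeg (a ++ b) = Q.cdeg a + Q.cdeg b - 1 := by
  simp only [cdeg, List.map_append, List.sum_append, List.length_append]
  push_cast
  ring

theorem cdeg_take_add_cdeg_drop (c : List Q.E) (i : ℕ) :
    Q.cdeg (c.take i) + Q.cdeg (c.drop i) = Q.cdeg c + 1 := by
  have := Q.cdeg_append (c.take i) (c.drop i)
  rw [List.take_append_drop] at this
  omega

@[simp]
theorem prefixDeg_zero (w : Q.Word) : Q.prefixDeg w 0 = 0 := by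
  simp [prefixDeg]

@[simp]
theorem prefixDeg_cons_succ (d : List Q.E) (w : Q.Word) (j : ℕ) :
    Q.prefixDeg (d :: w) (j + 1) = Q.cdeg d + Q.prefixDeg w j := by
  simp [prefixDeg]

@[simp]
theorem splitChunk_cons_zero (d : List Q.E) (w : Q.Word) (i : ℕ) :
    Q.splitChunk (d :: w) 0 i = d.take i :: d.drop i :: w := by
  simp [splitChunk]

@[simp]
theorem splitChunk_cons_succ (d : List Q.E) (w : Q.Word) (j i : ℕ) :
    Q.splitChunk (d :: w) (j + 1) i = d :: Q.splitChunk w j i := by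
  simp [splitChunk]

theorem length_splitChunk {w : Q.Word} {j : ℕ} (i : ℕ) (hj : j < w.length) :
    (Q.splitChunk w j i).length = w.length + 1 := by
  simp only [splitChunk, List.length_append, List.length_take, List.length_drop,
    List.length_cons, List.length_nil]
  omega

theorem getD_splitChunk_of_lt {w : Q.Word} {j l : ℕ} (i : ℕ) (hl : l < j) (hj : j < w.length) :
    (Q.splitChunk w j i).getD l [] = w.getD l [] := by
  induction w generalizing j l with
  | nil => simp at hj
  | cons d w ih =>
    match j, l with
    | j + 1, 0 => simp
    | j + 1, l + 1 => simpa using ih (by omega) (by simpa using hj)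

theorem getD_splitChunk_self {w : Q.Word} {j : ℕ} (i : ℕ) (hj : j < w.length) :
    (Q.splitChunk w j i).getD j [] = (w.getD j []).take i := by
  induction w generalizing j with
  | nil => simp at hj
  | cons d w ih =>
    match j with
    | 0 => simp
    | j + 1 => simpa using ih (by simpa using hj)

theorem getD_splitChunk_succ {w : Q.Word} {j : ℕ} (i : ℕ) (hj : j < w.length) :
    (Q.splitChunk w j i).getD (j + 1) [] = (w.getD j []).drop i := by
  induction w generalizing j with
  | nil => simp at hj
  | cons d w ih =>
    match j with
    | 0 => simp
    | j + 1 => simpa using ih (by simpa using hj)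

theorem getD_splitChunk_succ_of_lt {w : Q.Word} {j m : ℕ} (i : ℕ) (hm : j < m)
    (hj : j < w.length) : (Q.splitChunk w j i).getD (m + 1) [] = w.getD m [] := by
  induction w generalizing j m with
  | nil => simp at hj
  | cons d w ih =>
    match j, m with
    | 0, m + 1 => simp
    | j + 1, m + 1 => simpa using ih (by omega) (by simpa using hj)

theorem prefixDeg_splitChunk_of_le {w : Q.Word} {j l : ℕ} (i : ℕ) (hl : l ≤ j)
    (hj : j < w.length) : Q.prefixDeg (Q.splitChunk w j i) l = Q.prefixDeg w l := by
  induction w generalizing j l with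
  | nil => simp at hj
  | cons d w ih =>
    match j, l with
    | j, 0 => simp
    | j + 1, l + 1 => simpa using ih (by omega) (by simpa using hj)

theorem prefixDeg_splitChunk_succ {w : Q.Word} {j : ℕ} (i : ℕ) (hj : j < w.length) :
    Q.prefixDeg (Q.splitChunk w j i) (j + 1) =
      Q.prefixDeg w j + Q.cdeg ((w.getD j []).take i) := by
  induction w generalizing j with
  | nil => simp at hj
  | cons d w ih =>
    match j with
    | 0 => simp
    | j + 1 =>
      simp only [splitChunk_cons_succ, prefixDeg_cons_succ, ih (by simpa using hj),
        List.getD_cons_succ]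
      ring

theorem prefixDeg_splitChunk_succ_of_lt {w : Q.Word} {j m : ℕ} (i : ℕ) (hm : j < m)
    (hj : j < w.length) :
    Q.prefixDeg (Q.splitChunk w j i) (m + 1) = Q.prefixDeg w m + 1 := by
  induction w generalizing j m with
  | nil => simp at hj
  | cons d w ih =>
    match j, m with
    | 0, m + 1 =>
      simp only [splitChunk_cons_zero, prefixDeg_cons_succ]
      linarith [Q.cdeg_take_add_cdeg_drop d i]
    | j + 1, m + 1 =>
      simp only [splitChunk_cons_succ, prefixDeg_cons_succ,
        ih (j := j) (m := m) (by omega) (by simpa using hj)]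
      ring

theorem splitChunk_splitChunk_of_lt {w : Q.Word} {j' j : ℕ} (i i' : ℕ) (hlt : j' < j)
    (hj : j < w.length) :
    Q.splitChunk (Q.splitChunk w j i) j' i' = Q.splitChunk (Q.splitChunk w j' i') (j + 1) i := by
  induction w generalizing j' j with
  | nil => simp at hj
  | cons d w ih =>
    match j', j with
    | 0, j + 1 => simp
    | j' + 1, j + 1 => simpa using ih (by omega) (by simpa using hj)

theorem splitChunk_splitChunk_self {w : Q.Word} {j i i' : ℕ} (hle : i' ≤ i)
    (hj : j < w.length) :
    Q.splitChunk (Q.splitChunk w j i) j i' =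
      Q.splitChunk (Q.splitChunk w j i') (j + 1) (i - i') := by
  induction w generalizing j with
  | nil => simp at hj
  | cons d w ih =>
    match j with
    | 0 =>
      simp only [splitChunk_cons_zero, splitChunk_cons_succ, List.take_take, List.drop_take,
        List.drop_drop, min_eq_left hle, Nat.add_sub_cancel' hle]
    | j + 1 => simpa using ih (by simpa using hj)

theorem splitExp_add_splitExp_of_lt {w : Q.Word} {j' j : ℕ} (i i' : ℕ) (hlt : j' < j)
    (hj : j < w.length) :
    Q.splitExp w j' i' + Q.splitExp (Q.splitChunk w j' i') (j + 1) i =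
      Q.splitExp w j i + Q.splitExp (Q.splitChunk w j i) j' i' + 1 := by
  simp only [splitExp]
  rw [Q.prefixDeg_splitChunk_succ_of_lt i' hlt (hlt.trans hj),
    Q.getD_splitChunk_succ_of_lt i' hlt (hlt.trans hj), Q.prefixDeg_splitChunk_of_le i hlt.le hj,
    Q.getD_splitChunk_of_lt i hlt hj]
  ring

theorem splitExp_add_splitExp_self {w : Q.Word} {j i i' : ℕ} (hle : i' ≤ i)
    (hj : j < w.length) :
    Q.splitExp w j i' + Q.splitExp (Q.splitChunk w j i') (j + 1) (i - i') =
      Q.splitExp w j i + Q.splitExp (Q.splitChunk w j i) j i' + 1 := by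
  simp only [splitExp]
  rw [Q.prefixDeg_splitChunk_succ i' hj, Q.getD_splitChunk_succ i' hj,
    Q.prefixDeg_splitChunk_of_le i le_rfl hj, Q.getD_splitChunk_self i hj, List.take_take,
    min_eq_left hle]
  have hsplit : (w.getD j []).take i =
      (w.getD j []).take i' ++ ((w.getD j []).drop i').take (i - i') := by
    rw [← List.take_add, Nat.add_sub_cancel' hle]
  rw [hsplit, cdeg_append]
  ring

section Differential

variable (k : Type) [Field k]

@[simp]
theorem Dmap_single_inl (v : Q.V) : Q.Dmap k (Finsupp.single (Sum.inl v) 1) = 0 := by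
  simp [Dmap]

@[simp]
theorem Dmap_single_inr (w : Q.Word) :
    Q.Dmap k (Finsupp.single (Sum.inr w) 1) = Q.dWord k w := by
  simp [Dmap]

/-- A pair of successive splittings: first chunk `j` at `i`, then chunk `j'` of the result
at `i'`. -/
abbrev SplitPair := Σ _ : ℕ, Σ _ : ℕ, Σ _ : ℕ, ℕ

def splitPairs (w : Q.Word) : Finset SplitPair :=
  (Finset.range w.length).sigma fun j => (Finset.Ioo 0 (w.getD j []).length).sigma fun i =>
    (Finset.range (Q.splitChunk w j i).length).sigma fun j' =>
      Finset.Ioo 0 ((Q.splitChunk w j i).getD j' []).length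

noncomputable def pairTerm (w : Q.Word) (x : SplitPair) : Q.WMod k :=
  (-1 : k) ^ (Q.splitExp w x.1 x.2.1 + Q.splitExp (Q.splitChunk w x.1 x.2.1) x.2.2.1 x.2.2.2) •
    Finsupp.single (Sum.inr (Q.splitChunk (Q.splitChunk w x.1 x.2.1) x.2.2.1 x.2.2.2)) 1

theorem Dmap_dWord_eq_sum (w : Q.Word) :
    Q.Dmap k (Q.dWord k w) = ∑ x ∈ Q.splitPairs w, Q.pairTerm k w x := by
  simp only [dWord_eq_sum, map_sum, map_smul, Dmap_single_inr, Finset.smul_sum, smul_smul,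
    ← zpow_add₀ (show (-1 : k) ≠ 0 by norm_num)]
  simp only [Finset.sum_sigma']
  rfl

/-- Re-indexes a pair of cuts as the same two cuts performed in the opposite order. -/
def swapSplits : SplitPair → SplitPair
  | ⟨j, i, j', i'⟩ =>
    if j' < j then ⟨j', i', j + 1, i⟩
    else if j' = j then ⟨j, i', j + 1, i - i'⟩
    else if j' = j + 1 then ⟨j, i + i', j, i⟩
    else ⟨j' - 1, i', j, i⟩

theorem swapSplits_of_lt {j j' : ℕ} (i i' : ℕ) (h : j' < j) :
    swapSplits ⟨j, i, j', i'⟩ = ⟨j', i', j + 1, i⟩ := by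
  simp [swapSplits, h]

theorem swapSplits_self (j i i' : ℕ) : swapSplits ⟨j, i, j, i'⟩ = ⟨j, i', j + 1, i - i'⟩ := by
  simp [swapSplits]

theorem swapSplits_succ (j i i' : ℕ) : swapSplits ⟨j, i, j + 1, i'⟩ = ⟨j, i + i', j, i⟩ := by
  simp [swapSplits]

theorem swapSplits_succ_of_lt {j m : ℕ} (i i' : ℕ) (h : j < m) :
    swapSplits ⟨j, i, m + 1, i'⟩ = ⟨m, i', j, i⟩ := by
  simp [swapSplits, show ¬ m + 1 < j by omega, show m + 1 ≠ j by omega, h.ne']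

theorem swapSplits_ne (x : SplitPair) : swapSplits x ≠ x := by
  obtain ⟨j, i, j', i'⟩ := x
  intro h
  have hj' := congrArg (fun y : SplitPair => y.2.2.1) h
  rcases Nat.lt_or_eq_or_eq_succ_or_exists_lt_eq_succ j j' with hlt | rfl | rfl | ⟨m, hlt, rfl⟩
  · simp only [swapSplits_of_lt i i' hlt] at hj'; omega
  · simp only [swapSplits_self] at hj'; omega
  · simp only [swapSplits_succ] at hj'; omega
  · simp only [swapSplits_succ_of_lt i i' hlt] at hj'; omega

theorem swapSplits_swapSplits {j i j' i' : ℕ} (h : j' = j → i' ≤ i) :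
    swapSplits (swapSplits ⟨j, i, j', i'⟩) = ⟨j, i, j', i'⟩ := by
  rcases Nat.lt_or_eq_or_eq_succ_or_exists_lt_eq_succ j j' with hlt | rfl | rfl | ⟨m, hlt, rfl⟩
  · rw [swapSplits_of_lt i i' hlt, swapSplits_succ_of_lt i' i hlt]
  · rw [swapSplits_self, swapSplits_succ, Nat.add_sub_cancel' (h rfl)]
  · rw [swapSplits_succ, swapSplits_self, Nat.add_sub_cancel_left]
  · rw [swapSplits_succ_of_lt i i' hlt, swapSplits_of_lt i' i hlt]

variable {Q}

theorem mk_mem_splitPairs {w : Q.Word} {j i j' i' : ℕ} :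
    (⟨j, i, j', i'⟩ : SplitPair) ∈ Q.splitPairs w ↔
      j < w.length ∧ (0 < i ∧ i < (w.getD j []).length) ∧
        j' < (Q.splitChunk w j i).length ∧
          (0 < i' ∧ i' < ((Q.splitChunk w j i).getD j' []).length) := by
  simp [splitPairs]

theorem swapSplits_mem_splitPairs {w : Q.Word} {x : SplitPair} (hx : x ∈ Q.splitPairs w) :
    swapSplits x ∈ Q.splitPairs w := by
  obtain ⟨j, i, j', i'⟩ := x
  obtain ⟨hj, ⟨hi0, hi⟩, hj', hi'0, hi'⟩ := mk_mem_splitPairs.mp hx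
  rw [Q.length_splitChunk i hj] at hj'
  rcases Nat.lt_or_eq_or_eq_succ_or_exists_lt_eq_succ j j' with hlt | rfl | rfl | ⟨m, hlt, rfl⟩
  · rw [Q.getD_splitChunk_of_lt i hlt hj] at hi'
    rw [swapSplits_of_lt i i' hlt, mk_mem_splitPairs, Q.length_splitChunk i' (hlt.trans hj),
      Q.getD_splitChunk_succ_of_lt i' hlt (hlt.trans hj)]
    omega
  · rw [Q.getD_splitChunk_self i hj, List.length_take] at hi'
    rw [swapSplits_self, mk_mem_splitPairs, Q.length_splitChunk i' hj,
      Q.getD_splitChunk_succ i' hj, List.length_drop]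
    omega
  · rw [Q.getD_splitChunk_succ i hj, List.length_drop] at hi'
    rw [swapSplits_succ, mk_mem_splitPairs, Q.length_splitChunk (i + i') hj,
      Q.getD_splitChunk_self (i + i') hj, List.length_take]
    omega
  · rw [Q.getD_splitChunk_succ_of_lt i hlt hj] at hi'
    rw [swapSplits_succ_of_lt i i' hlt, mk_mem_splitPairs, Q.length_splitChunk i' (by omega),
      Q.getD_splitChunk_of_lt i' hlt (by omega)]
    omega

theorem pairTerm_add_pairTerm_swapSplits_of_le {w : Q.Word} {j i j' i' : ℕ}
    (hx : ⟨j, i, j', i'⟩ ∈ Q.splitPairs w) (hle : j' ≤ j) :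
    Q.pairTerm k w ⟨j, i, j', i'⟩ + Q.pairTerm k w (swapSplits ⟨j, i, j', i'⟩) = 0 := by
  obtain ⟨hj, -, -, -, hi'⟩ := mk_mem_splitPairs.mp hx
  rcases hle.lt_or_eq with hlt | rfl
  · rw [swapSplits_of_lt i i' hlt, pairTerm, pairTerm,
      ← Q.splitChunk_splitChunk_of_lt i i' hlt hj, Q.splitExp_add_splitExp_of_lt i i' hlt hj]
    exact neg_one_zpow_smul_add_neg_one_zpow_add_one_smul _ _
  · have hii : i' ≤ i := by
      rw [Q.getD_splitChunk_self i hj, List.length_take] at hi'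
      omega
    rw [swapSplits_self, pairTerm, pairTerm, ← Q.splitChunk_splitChunk_self hii hj,
      Q.splitExp_add_splitExp_self hii hj]
    exact neg_one_zpow_smul_add_neg_one_zpow_add_one_smul _ _

theorem swapSplits_swapSplits_of_mem {w : Q.Word} {x : SplitPair} (hx : x ∈ Q.splitPairs w) :
    swapSplits (swapSplits x) = x := by
  obtain ⟨j, i, j', i'⟩ := x
  obtain ⟨hj, -, -, -, hi'⟩ := mk_mem_splitPairs.mp hx
  refine swapSplits_swapSplits fun h => ?_
  subst h
  rw [Q.getD_splitChunk_self i hj, List.length_take] at hi'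
  omega

theorem pairTerm_add_pairTerm_swapSplits {w : Q.Word} {x : SplitPair}
    (hx : x ∈ Q.splitPairs w) : Q.pairTerm k w x + Q.pairTerm k w (swapSplits x) = 0 := by
  obtain ⟨j, i, j', i'⟩ := x
  have hy := swapSplits_mem_splitPairs hx
  -- for `j < j'`, apply the case `j' ≤ j` to the partner, whose partner is `x` again
  rcases Nat.lt_or_eq_or_eq_succ_or_exists_lt_eq_succ j j' with hlt | rfl | rfl | ⟨m, hm, rfl⟩
  · exact pairTerm_add_pairTerm_swapSplits_of_le k hx hlt.le
  · exact pairTerm_add_pairTerm_swapSplits_of_le k hx le_rfl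
  · rw [swapSplits_succ] at hy ⊢
    rw [add_comm, ← pairTerm_add_pairTerm_swapSplits_of_le k hy le_rfl, swapSplits_self,
      Nat.add_sub_cancel_left]
  · rw [swapSplits_succ_of_lt i i' hm] at hy ⊢
    rw [add_comm, ← pairTerm_add_pairTerm_swapSplits_of_le k hy hm.le, swapSplits_of_lt i' i hm]

theorem Dmap_dWord (w : Q.Word) : Q.Dmap k (Q.dWord k w) = 0 := by
  rw [Dmap_dWord_eq_sum]
  exact Finset.sum_involution (fun x _ => swapSplits x)
    (fun _ hx => pairTerm_add_pairTerm_swapSplits k hx) (fun x _ _ => swapSplits_ne x)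
    (fun _ hx => swapSplits_mem_splitPairs hx) (fun _ hx => swapSplits_swapSplits_of_mem hx)

theorem Dmap_comp_Dmap : Q.Dmap k ∘ₗ Q.Dmap k = 0 :=
  Finsupp.basisSingleOne.ext fun b => by
    cases b with
    | inl v => simp
    | inr w => simp [Dmap_dWord]

end Differential

variable {Q} {J : Q.E → Q.E → Prop} (k : Type) [Field k]

theorem ChunkOK.take {c : List Q.E} (hc : Q.ChunkOK J c) {i : ℕ} (hi : 0 < i) :
    Q.ChunkOK J (c.take i) :=
  ⟨by simpa [List.take_eq_nil_iff, hi.ne'] using hc.1, List.IsChain.take hc.2 i⟩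

theorem ChunkOK.drop {c : List Q.E} (hc : Q.ChunkOK J c) {i : ℕ} (hi : i < c.length) :
    Q.ChunkOK J (c.drop i) :=
  ⟨by simpa [List.drop_eq_nil_iff] using hi, List.IsChain.drop hc.2 i⟩

theorem WordOK.splitChunk (hJ : ∀ a b, J a b → Q.rel a b) {w : Q.Word} (hw : Q.WordOK J w)
    {j i : ℕ} (hj : j < w.length) (hi0 : 0 < i) (hi : i < (w.getD j []).length) :
    Q.WordOK J (Q.splitChunk w j i) := by
  obtain ⟨-, hchunks, hchain⟩ := hw
  set c := w.getD j [] with hc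
  have hw : w = w.take j ++ c :: w.drop (j + 1) := by
    rw [hc, List.getD_eq_getElem w [] hj, ← List.drop_eq_getElem_cons hj, List.take_append_drop]
  have hcok : Q.ChunkOK J c := hchunks c (by rw [hc, List.getD_eq_getElem w [] hj]; simp)
  have hjunction : ∀ a ∈ (c.take i).getLast?, ∀ b ∈ (c.drop i).head?, J a b :=
    (List.isChain_append.mp (by rw [List.take_append_drop]; exact hcok.2)).2.2
  have hspl : Q.splitChunk w j i = w.take j ++ c.take i :: c.drop i :: w.drop (j + 1) := by
    simp [QuadData.splitChunk, hc]
  rw [hspl]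
  refine ⟨by simp, fun d hd => ?_, ?_⟩
  · simp only [List.mem_append, List.mem_cons] at hd
    rcases hd with hd | rfl | rfl | hd
    exacts [hchunks d (List.mem_of_mem_take hd), hcok.take hi0, hcok.drop hi,
      hchunks d (List.mem_of_mem_drop hd)]
  · rw [hw] at hchain
    refine List.IsChain.append_cons_cons_of_append_cons hchain (fun x _ hx => ?_)
      (fun y _ hy => ?_) ⟨fun a ha b hb => Q.rel_comp a b (hJ a b (hjunction a ha b hb)),
        fun a ha b hb hab => hab.2 (hjunction a ha b hb)⟩
    · rwa [JComposable, JNotRel, List.head?_take, if_neg hi0.ne']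
    · rwa [JComposable, JNotRel, List.getLast?_drop, if_neg (by omega)]

theorem Dmap_single_mem_WSub (hJ : ∀ a b, J a b → Q.rel a b) {b : Q.WBasis}
    (hb : Q.BasisOK J b) : Q.Dmap k (Finsupp.single b 1) ∈ Q.WSub k J := by
  cases b with
  | inl v => simp
  | inr w =>
    rw [Dmap_single_inr, dWord_eq_sum]
    refine Submodule.sum_mem _ fun j hj => Submodule.sum_mem _ fun i hi => ?_
    rw [Finset.mem_range] at hj
    rw [Finset.mem_Ioo] at hi
    exact Submodule.smul_mem _ _ <| Submodule.subset_span
      ⟨Sum.inr _, WordOK.splitChunk hJ hb hj hi.1 hi.2, rfl⟩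

theorem WSub_le_comap_Dmap (hJ : ∀ a b, J a b → Q.rel a b) :
    Q.WSub k J ≤ (Q.WSub k J).comap (Q.Dmap k) :=
  Submodule.span_le.mpr fun _ ⟨_, hb, hx⟩ => hx ▸ Dmap_single_mem_WSub k hJ hb

end QuadData

/-- The map `d'`, defined on generators by `d'([α]) = 0` and
`d'([α₁ ⋯ αₙ]) = Σᵢ (-1) ^ |[α₁ ⋯ αᵢ]| [α₁ ⋯ αᵢ][αᵢ₊₁ ⋯ αₙ]` and extended as a graded
derivation, satisfies `d' ∘ d' = 0` on `A_J`, so `A_J` is a well-defined dg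
algebra. -/
theorem partial_resolution_d_squared_zero (k : Type) [Field k] (Q : QuadData)
    (J : Q.E → Q.E → Prop) (hJ : ∀ a b, J a b → Q.rel a b) :
    (∀ x ∈ Q.WSub k J, Q.Dmap k x ∈ Q.WSub k J) ∧
    (∀ x ∈ Q.WSub k J, Q.Dmap k (Q.Dmap k x) = 0) :=
  ⟨fun _ hx => QuadData.WSub_le_comap_Dmap k hJ hx,
    fun x _ => LinearMap.congr_fun (QuadData.Dmap_comp_Dmap k) x⟩
end

section
/- Let A = kQ/I be a graded quadratic monomial algebra, e a sum of vertex idempotents, and A_e the quotient quadratic monomial algebra defined by collapsing relations through the vertices of e. If e = e' + e'' is a decomposition into sums of vertex idempotents with disjoint supports, then there are isomorphisms of dg algebras (A_{e'})_{e''} ≅ A_e ≅ (A_{e''})_{e'}. -/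
universe w

namespace QuadData

variable (Q : QuadData)

/-- There is a cyclic path `α₁ ⋯ αₙ` with `αᵢαᵢ₊₁ ∈ I` for all `i ∈ ℤ/nℤ`. -/
def RelCycle : Prop :=
  ∃ (l : List Q.E) (h : l ≠ []), Q.AllRel l ∧ Q.rel (l.getLast h) (l.head h)

/-- There is a cyclic path `α₁ ⋯ αₙ` with `αᵢαᵢ₊₁ ∉ I` for all `i ∈ ℤ/nℤ`. -/
def RelFreeCycle : Prop :=
  ∃ (l : List Q.E) (h : l ≠ []), Q.Composable l ∧ Q.AvoidsRel l ∧
    Q.tgt (l.getLast h) = Q.src (l.head h) ∧ ¬ Q.rel (l.getLast h) (l.head h)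

/-- Combinatorial characterisation of homological smoothness of `kQ/⟨I⟩`:
there is no cyclic path all of whose consecutive pairs are relations. -/
def SmoothP : Prop := ¬ Q.RelCycle

/-- Combinatorial characterisation of properness of `kQ/⟨I⟩`:
there is no relation-free cyclic path. -/
def ProperP : Prop := ¬ Q.RelFreeCycle

/-- `A = kQ/⟨I⟩` is homologically smooth iff its minimal bimodule resolution, whose
terms are indexed by the paths all of whose consecutive pairs lie in `I`, is finite. -/
def IsSmoothC : Prop := Finite {l : List Q.E // Q.AllRel l}

/-- `A = kQ/⟨I⟩` (with zero differential) is proper iff its total cohomology, i.e.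
`A` itself, is finite dimensional over `k`; a basis of `A` is given by the
relation-avoiding paths. -/
def IsProperC : Prop := Finite {l : List Q.E // Q.Composable l ∧ Q.AvoidsRel l}

/-- The graded quadratic dual `A⁽ᴵ⁾ = kQᵒᵖ/⟨I^⊥⟩`, where
`I^⊥ = {βᵒᵖαᵒᵖ : αβ ∉ I}` and `|αᵒᵖ| = 1 - |α|`. -/
@[reducible] def dual : QuadData where
  V := Q.V
  E := Q.E
  src := Q.tgt
  tgt := Q.src
  deg := fun e => 1 - Q.deg e
  rel := fun x y => Q.tgt y = Q.src x ∧ ¬ Q.rel y x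
  rel_comp := fun _ _ h => h.1.symm

/-- An arrow of the quiver of `A_e` (for `supp` the support of the idempotent `e`):
a path `α₁ ⋯ αₛ` all of whose consecutive pairs are relations passing through
vertices of `supp`, with endpoints outside `supp`. -/
structure CutArrow (supp : Set Q.V) where
  letters : List Q.E
  ne : letters ≠ []
  chain : letters.Chain' fun a b => Q.rel a b ∧ Q.src b ∈ supp
  src_out : Q.src (letters.head ne) ∉ supp
  tgt_out : Q.tgt (letters.getLast ne) ∉ supp

/-- The graded quadratic monomial algebra `A_e` obtained by collapsing the relations
through the vertices in `supp`: vertices `Q₀ ∖ supp`, arrows `[α₁ ⋯ αₛ]` of degree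
`Σ|αᵢ| - s + 1`, and relations `[α₁ ⋯ αₛ][β₁ ⋯ βₜ]` whenever `αₛβ₁ ∈ I`. -/
@[reducible] def cut (supp : Set Q.V) : QuadData where
  V := {v : Q.V // v ∉ supp}
  E := Q.CutArrow supp
  src := fun p => ⟨Q.src (p.letters.head p.ne), p.src_out⟩
  tgt := fun p => ⟨Q.tgt (p.letters.getLast p.ne), p.tgt_out⟩
  deg := fun p => ((p.letters.map Q.deg).sum - p.letters.length) + 1
  rel := fun p q => Q.rel (p.letters.getLast p.ne) (q.letters.head q.ne)
  rel_comp := fun _ _ h => Subtype.ext (Q.rel_comp _ _ h)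

/-- An arrow of the presentation of the idempotent subalgebra `eAe`:
a relation-avoiding path with endpoints in `supp` and interior outside `supp`. -/
structure IdemArrow (supp : Set Q.V) where
  letters : List Q.E
  ne : letters ≠ []
  chain : letters.Chain' fun a b => Q.tgt a = Q.src b ∧ ¬ Q.rel a b ∧ Q.src b ∉ supp
  src_in : Q.src (letters.head ne) ∈ supp
  tgt_in : Q.tgt (letters.getLast ne) ∈ supp

/-- The idempotent subalgebra `eAe` as a graded quadratic monomial algebra. -/
@[reducible] def idem (supp : Set Q.V) : QuadData where
  V := {v : Q.V // v ∈ supp}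
  E := Q.IdemArrow supp
  src := fun p => ⟨Q.src (p.letters.head p.ne), p.src_in⟩
  tgt := fun p => ⟨Q.tgt (p.letters.getLast p.ne), p.tgt_in⟩
  deg := fun p => (p.letters.map Q.deg).sum
  rel := fun p q => Q.rel (p.letters.getLast p.ne) (q.letters.head q.ne)
  rel_comp := fun _ _ h => Subtype.ext (Q.rel_comp _ _ h)

/-- An isomorphism of presentations of graded quadratic monomial algebras: it
induces an isomorphism of the associated dg algebras (with zero differential). -/
structure Iso (Q₁ Q₂ : QuadData) where
  vEquiv : Q₁.V ≃ Q₂.V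
  eEquiv : Q₁.E ≃ Q₂.E
  map_src : ∀ e, Q₂.src (eEquiv e) = vEquiv (Q₁.src e)
  map_tgt : ∀ e, Q₂.tgt (eEquiv e) = vEquiv (Q₁.tgt e)
  map_deg : ∀ e, Q₂.deg (eEquiv e) = Q₁.deg e
  map_rel : ∀ a b, Q₁.rel a b ↔ Q₂.rel (eEquiv a) (eEquiv b)

/-- The conditions for `(Q, I)` to present a (graded) gentle algebra. -/
structure IsGentle (Q : QuadData) : Prop where
  finV : Finite Q.V
  finE : Finite Q.E
  src_two : ∀ a b c : Q.E, Q.src a = Q.src b → Q.src b = Q.src c → a = b ∨ b = c ∨ a = c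
  tgt_two : ∀ a b c : Q.E, Q.tgt a = Q.tgt b → Q.tgt b = Q.tgt c → a = b ∨ b = c ∨ a = c
  rel_right : ∀ a b b', Q.rel a b → Q.rel a b' → b = b'
  rel_left : ∀ a a' b, Q.rel a b → Q.rel a' b → a = a'
  nonrel_right : ∀ a b b', Q.tgt a = Q.src b → Q.tgt a = Q.src b' →
    ¬ Q.rel a b → ¬ Q.rel a b' → b = b'
  nonrel_left : ∀ a a' b, Q.tgt a = Q.src b → Q.tgt a' = Q.src b →
    ¬ Q.rel a b → ¬ Q.rel a' b → a = a'

end QuadData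

/-! An arrow of `(A_{e'})_{e''}` is a string of arrows of `A_{e'}`, consecutive ones glued along
a relation at a vertex of `s₂`; flattening it gives an arrow of `A_e`. Conversely, cutting an arrow
of `A_e` at its interior vertices in `s₂`, i.e. outside `s₁`, recovers the blocks, and
disjointness of `s₁` and `s₂` makes this the only decomposition. Degrees match since
`Σᵢ (dᵢ - sᵢ + 1) - k + 1 = Σᵢ dᵢ - Σᵢ sᵢ + 1` for `k` blocks of lengths `sᵢ` and degree
sums `dᵢ`. -/

theorem List.IsChain.and {α : Type*} {R S : α → α → Prop} {l : List α}
    (hR : l.IsChain R) (hS : l.IsChain S) : l.IsChain fun a b => R a b ∧ S a b :=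
  List.isChain_iff_getElem.2 fun i hi =>
    ⟨List.isChain_iff_getElem.1 hR i hi, List.isChain_iff_getElem.1 hS i hi⟩

theorem List.sum_map_flatten_sub_length {α : Type*} (f : α → ℤ) (L : List (List α)) :
    (L.flatten.map f).sum - L.flatten.length
      = (L.map fun g => (g.map f).sum - (g.length : ℤ) + 1).sum - L.length := by
  induction L with
  | nil => simp
  | cons g L ih =>
    simp only [List.flatten_cons, List.map_append, List.sum_append, List.length_append,
      List.map_cons, List.sum_cons, List.length_cons] at *
    push_cast at *
    linarith

namespace QuadData

variable {Q : QuadData} {s₁ s₂ : Set Q.V}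

theorem CutArrow.letters_injective {s : Set Q.V} :
    Function.Injective (CutArrow.letters : Q.CutArrow s → List Q.E) := by
  rintro ⟨⟩ ⟨⟩ rfl
  rfl

section Blocks

variable {s : Set Q.V} (B : List (Q.CutArrow s))

theorem nil_notMem_map_letters : [] ∉ B.map CutArrow.letters := by
  simpa using fun p _ => p.ne

variable {B}

theorem flatten_map_letters_ne_nil (hB : B ≠ []) : (B.map CutArrow.letters).flatten ≠ [] := by
  simpa [List.flatten_eq_nil_iff] using ⟨B.head hB, B.head_mem hB, (B.head hB).ne⟩

theorem head_flatten_map_letters (hB : B ≠ []) :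
    (B.map CutArrow.letters).flatten.head (flatten_map_letters_ne_nil hB)
      = (B.head hB).letters.head (B.head hB).ne := by
  rw [List.head_flatten_eq_head_head _ (by simpa using (B.head hB).ne)]
  simp

theorem getLast_flatten_map_letters (hB : B ≠ []) :
    (B.map CutArrow.letters).flatten.getLast (flatten_map_letters_ne_nil hB)
      = (B.getLast hB).letters.getLast (B.getLast hB).ne := by
  rw [List.getLast_flatten_eq_getLast_getLast _ (by simpa using (B.getLast hB).ne)]
  simp

end Blocks

def flattenCutArrow (P : (Q.cut s₁).CutArrow {v | v.1 ∈ s₂}) : Q.CutArrow (s₁ ∪ s₂) where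
  letters := (P.letters.map CutArrow.letters).flatten
  ne := flatten_map_letters_ne_nil P.ne
  chain := by
    refine (List.isChain_flatten (nil_notMem_map_letters _)).2
      ⟨by simpa using fun p _ => p.chain.imp fun _ _ h => ⟨h.1, Or.inl h.2⟩, ?_⟩
    refine (List.isChain_map _).2 (P.chain.imp fun p q h x hx y hy => ?_)
    rw [← List.getLast_of_mem_getLast? hx, ← List.head_of_mem_head? hy]
    exact ⟨h.1, Or.inr h.2⟩
  src_out := by
    rw [head_flatten_map_letters P.ne]
    exact not_or.2 ⟨(P.letters.head P.ne).src_out, P.src_out⟩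
  tgt_out := by
    rw [getLast_flatten_map_letters P.ne]
    exact not_or.2 ⟨(P.letters.getLast P.ne).tgt_out, P.tgt_out⟩

open Classical in
/-- `List.splitBy (Q.joinsIn s)` cuts a path exactly at its interior vertices outside `s`. -/
noncomputable def joinsIn (s : Set Q.V) (_ b : Q.E) : Bool := decide (Q.src b ∈ s)

theorem splitBy_letters_flattenCutArrow (hdisj : Disjoint s₁ s₂)
    (P : (Q.cut s₁).CutArrow {v | v.1 ∈ s₂}) :
    (flattenCutArrow P).letters.splitBy (Q.joinsIn s₁) = P.letters.map CutArrow.letters := by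
  refine List.splitBy_flatten (nil_notMem_map_letters _)
    (by simpa [joinsIn] using fun p _ => p.chain.imp fun _ _ h => h.2) ?_
  refine (List.isChain_map _).2 (P.chain.imp fun p q h => ⟨p.ne, q.ne, ?_⟩)
  simpa [joinsIn] using Set.disjoint_right.1 hdisj h.2

theorem flattenCutArrow_injective (hdisj : Disjoint s₁ s₂) :
    Function.Injective (flattenCutArrow : (Q.cut s₁).CutArrow {v | v.1 ∈ s₂} → _) := by
  intro P P' h
  have hsplit := splitBy_letters_flattenCutArrow hdisj P
  rw [h, splitBy_letters_flattenCutArrow hdisj P'] at hsplit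
  exact CutArrow.letters_injective (List.map_injective_iff.2 CutArrow.letters_injective hsplit.symm)

section Split

variable (l : Q.CutArrow (s₁ ∪ s₂))

theorem isChain_flatten_splitBy_letters :
    (l.letters.splitBy (Q.joinsIn s₁)).flatten.IsChain fun a b =>
      Q.rel a b ∧ Q.src b ∈ s₁ ∪ s₂ := by
  rw [List.flatten_splitBy]
  exact l.chain

theorem isChain_splitBy_letters :
    (l.letters.splitBy (Q.joinsIn s₁)).IsChain fun g g' =>
      ∃ (hg : g ≠ []) (hg' : g' ≠ []), Q.rel (g.getLast hg) (g'.head hg') ∧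
        Q.src (g'.head hg') ∈ s₂ ∧ Q.src (g'.head hg') ∉ s₁ := by
  have hjunction := ((List.isChain_flatten (List.nil_notMem_splitBy _ _)).1
    (isChain_flatten_splitBy_letters l)).2
  refine (hjunction.and (List.isChain_getLast_head_splitBy _ _)).imp
    fun g g' ⟨hrel, hg, hg', hsplit⟩ => ⟨hg, hg', ?_⟩
  obtain ⟨hr, hs⟩ := hrel _ (List.getLast_mem_getLast? hg) _ (List.head_mem_head? hg')
  have hs₁ : Q.src (g'.head hg') ∉ s₁ := by simpa [joinsIn] using hsplit
  exact ⟨hr, hs.resolve_left hs₁, hs₁⟩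

theorem exists_letters_eq_of_mem_splitBy {g : List Q.E}
    (hg : g ∈ l.letters.splitBy (Q.joinsIn s₁)) : ∃ p : Q.CutArrow s₁, p.letters = g := by
  have hG := isChain_splitBy_letters l
  have hchain := ((List.isChain_flatten (List.nil_notMem_splitBy _ _)).1
    (isChain_flatten_splitBy_letters l)).1 g hg
  -- A block starts where `l` starts or right after a cut, and ends where `l` ends or right
  -- before a cut.
  have hsrc : ∀ g ∈ l.letters.splitBy (Q.joinsIn s₁), ∀ hg : g ≠ [], Q.src (g.head hg) ∉ s₁ :=
    hG.induction _ _ (fun _ _ ⟨_, _, _, _, h⟩ _ _ => h) fun _ _ => by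
      rw [List.head_head_splitBy _ l.ne]
      exact fun h => l.src_out (Or.inl h)
  have htgt : ∀ g ∈ l.letters.splitBy (Q.joinsIn s₁), ∀ hg : g ≠ [], Q.tgt (g.getLast hg) ∉ s₁ :=
    hG.backwards_induction _ _ (fun _ _ ⟨_, _, hr, _, h⟩ _ _ => Q.rel_comp _ _ hr ▸ h)
      fun _ _ => by
        rw [List.getLast_getLast_splitBy _ l.ne]
        exact fun h => l.tgt_out (Or.inl h)
  have hne := List.ne_nil_of_mem_splitBy hg
  refine ⟨⟨g, hne, ?_, hsrc g hg hne, htgt g hg hne⟩, rfl⟩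
  refine (hchain.and (List.isChain_of_mem_splitBy hg)).imp fun _ _ ⟨⟨hr, _⟩, h⟩ => ⟨hr, ?_⟩
  simpa [joinsIn] using h

end Split

theorem flattenCutArrow_surjective :
    Function.Surjective (flattenCutArrow : (Q.cut s₁).CutArrow {v | v.1 ∈ s₂} → _) := by
  intro l
  obtain ⟨B, hB⟩ : l.letters.splitBy (Q.joinsIn s₁) ∈ Set.range (List.map CutArrow.letters) := by
    rw [Set.range_list_map]
    exact fun g hg => exists_letters_eq_of_mem_splitBy l hg
  have hflat : (B.map CutArrow.letters).flatten = l.letters := by rw [hB, List.flatten_splitBy]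
  have hne : B ≠ [] := by
    rintro rfl
    exact l.ne (by simpa using hflat.symm)
  refine ⟨⟨B, hne, ?_, ?_, ?_⟩, CutArrow.letters_injective hflat⟩
  · have hG := isChain_splitBy_letters l
    rw [← hB, List.isChain_map] at hG
    exact hG.imp fun _ _ ⟨_, _, hr, hs, _⟩ => ⟨hr, hs⟩
  · show Q.src ((B.head hne).letters.head _) ∉ s₂
    rw [← head_flatten_map_letters hne]
    simpa only [hflat] using fun h => l.src_out (Or.inr h)
  · show Q.tgt ((B.getLast hne).letters.getLast _) ∉ s₂
    rw [← getLast_flatten_map_letters hne]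
    simpa only [hflat] using fun h => l.tgt_out (Or.inr h)

def cutCutVertexEquiv : ((Q.cut s₁).cut {v | v.1 ∈ s₂}).V ≃ (Q.cut (s₁ ∪ s₂)).V where
  toFun w := ⟨w.1.1, fun h => h.elim w.1.2 w.2⟩
  invFun v := ⟨⟨v.1, fun h => v.2 (Or.inl h)⟩, fun h => v.2 (Or.inr h)⟩

noncomputable def cutCutIso (hdisj : Disjoint s₁ s₂) :
    Iso ((Q.cut s₁).cut {v | v.1 ∈ s₂}) (Q.cut (s₁ ∪ s₂)) where
  vEquiv := cutCutVertexEquiv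
  eEquiv := .ofBijective flattenCutArrow
    ⟨flattenCutArrow_injective hdisj, flattenCutArrow_surjective⟩
  map_src P := Subtype.ext <| congrArg Q.src (head_flatten_map_letters P.ne)
  map_tgt P := Subtype.ext <| congrArg Q.tgt (getLast_flatten_map_letters P.ne)
  map_deg P := by
    show ((flattenCutArrow P).letters.map Q.deg).sum - (flattenCutArrow P).letters.length + 1 = _
    rw [flattenCutArrow, List.sum_map_flatten_sub_length, List.map_map, List.length_map]
    rfl
  map_rel P P' := by
    show _ ↔ Q.rel ((P.letters.map CutArrow.letters).flatten.getLast _)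
      ((P'.letters.map CutArrow.letters).flatten.head _)
    rw [getLast_flatten_map_letters P.ne, head_flatten_map_letters P'.ne]

end QuadData

/-- Let `A = kQ/I` be a graded quadratic monomial algebra and
`e = e' + e''` a decomposition of a sum of vertex idempotents into sums with disjoint
supports `s₁, s₂`.  Then `(A_{e'})_{e''} ≅ A_e ≅ (A_{e''})_{e'}` as dg algebras. -/
theorem cut_cut_iso (Q : QuadData) (s₁ s₂ : Set Q.V) (hdisj : Disjoint s₁ s₂) :
    Nonempty (QuadData.Iso ((Q.cut s₁).cut {v | v.1 ∈ s₂}) (Q.cut (s₁ ∪ s₂))) ∧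
    Nonempty (QuadData.Iso ((Q.cut s₂).cut {v | v.1 ∈ s₁}) (Q.cut (s₁ ∪ s₂))) := by
  refine ⟨⟨QuadData.cutCutIso hdisj⟩, ?_⟩
  rw [Set.union_comm s₁ s₂]
  exact ⟨QuadData.cutCutIso hdisj.symm⟩
end

section
/- Let A = kQ/I be a graded quadratic monomial algebra and e a sum of vertex idempotents, with 1 − e the complementary sum. Then there are isomorphisms of dg algebras: (1) A_e ≅ ((1−e)A^!(1−e))^!, and (2) eAe ≅ ((A^!)_{1−e})^!. -/
universe w

/-!
Reversing paths identifies the arrows of `A_e`, the paths `α₁ ⋯ αₛ` with `αᵢαᵢ₊₁ ∈ I`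
through `supp`, with the relation-avoiding paths of `A^!` whose interior avoids `suppᶜ`,
i.e. with the arrows of `(1-e) A^! (1-e)`; the degrees `Σ|αᵢ| - s + 1` and `Σ(1 - |αᵢ|)`
add up to `1`, and the relations of the two sides are complementary.  So
`(A_e)^! ≅ (1-e) A^! (1-e)`, and in the same way `(eAe)^! ≅ (A^!)_{1-e}`.  Dualising both
and using `(A^!)^! ≅ A` gives the two isomorphisms.
-/

theorem List.sum_map_one_sub {α : Type*} (f : α → ℤ) (l : List α) :
    (l.map fun a => 1 - f a).sum = l.length - (l.map f).sum := by
  induction l with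
  | nil => simp
  | cons a t ih =>
    simp only [List.map_cons, List.sum_cons, List.length_cons, ih]
    push_cast
    ring

namespace QuadData

namespace Iso

variable {Q₁ Q₂ Q₃ : QuadData}

def trans (f : Iso Q₁ Q₂) (g : Iso Q₂ Q₃) : Iso Q₁ Q₃ where
  vEquiv := f.vEquiv.trans g.vEquiv
  eEquiv := f.eEquiv.trans g.eEquiv
  map_src e := by simp [g.map_src, f.map_src]
  map_tgt e := by simp [g.map_tgt, f.map_tgt]
  map_deg e := by simp [g.map_deg, f.map_deg]
  map_rel a b := (f.map_rel a b).trans (g.map_rel _ _)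

def dual (f : Iso Q₁ Q₂) : Iso Q₁.dual Q₂.dual where
  vEquiv := f.vEquiv
  eEquiv := f.eEquiv
  map_src := f.map_tgt
  map_tgt := f.map_src
  map_deg e := by simp [f.map_deg]
  map_rel a b := by simp [f.map_tgt, f.map_src, ← f.map_rel]

end Iso

variable (Q : QuadData)

theorem dual_dual_rel_iff (a b : Q.E) : Q.dual.dual.rel a b ↔ Q.rel a b :=
  ⟨fun ⟨hcomp, hnot⟩ => by_contra fun h => hnot ⟨hcomp.symm, h⟩,
    fun h => ⟨(Q.rel_comp a b h).symm, fun hdual => hdual.2 h⟩⟩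

def isoDualDual : Iso Q Q.dual.dual where
  vEquiv := Equiv.refl _
  eEquiv := Equiv.refl _
  map_src _ := rfl
  map_tgt _ := rfl
  map_deg _ := sub_sub_cancel 1 _
  map_rel a b := (Q.dual_dual_rel_iff a b).symm

@[ext]
theorem CutArrow.ext {supp : Set Q.V} {p q : Q.CutArrow supp} (h : p.letters = q.letters) :
    p = q := by
  cases p; cases q; cases h; rfl

@[ext]
theorem IdemArrow.ext {supp : Set Q.V} {p q : Q.IdemArrow supp} (h : p.letters = q.letters) :
    p = q := by
  cases p; cases q; cases h; rfl

variable {supp : Set Q.V}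

theorem dual_idemArrow_chain_iff (a b : Q.E) :
    (Q.dual.tgt b = Q.dual.src a ∧ ¬ Q.dual.rel b a ∧ Q.dual.src a ∉ suppᶜ) ↔
      (Q.rel a b ∧ Q.src b ∈ supp) := by
  dsimp only [dual]
  constructor
  · rintro ⟨hcomp, hnot, hmem⟩
    have hrel := (Q.dual_dual_rel_iff a b).1 ⟨hcomp, hnot⟩
    exact ⟨hrel, Q.rel_comp a b hrel ▸ Set.notMem_compl_iff.1 hmem⟩
  · rintro ⟨hrel, hmem⟩
    obtain ⟨hcomp, hnot⟩ := (Q.dual_dual_rel_iff a b).2 hrel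
    exact ⟨hcomp, hnot, Set.notMem_compl_iff.2 (Q.rel_comp a b hrel ▸ hmem)⟩

theorem dual_cutArrow_chain_iff (a b : Q.E) :
    (Q.dual.rel b a ∧ Q.dual.src a ∈ suppᶜ) ↔
      (Q.tgt a = Q.src b ∧ ¬ Q.rel a b ∧ Q.src b ∉ supp) := by
  dsimp only [dual]
  exact ⟨fun ⟨⟨hcomp, hnot⟩, hmem⟩ => ⟨hcomp, hnot, hcomp ▸ hmem⟩,
    fun ⟨hcomp, hnot, hmem⟩ => ⟨⟨hcomp, hnot⟩, hcomp ▸ hmem⟩⟩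

variable (supp)

def cutArrowEquivDualIdemArrow : Q.CutArrow supp ≃ Q.dual.IdemArrow suppᶜ where
  toFun p :=
    { letters := p.letters.reverse
      ne := List.reverse_ne_nil_iff.2 p.ne
      chain := List.isChain_reverse.2 (p.chain.imp fun a b h => (Q.dual_idemArrow_chain_iff a b).2 h)
      src_in := by simpa using p.tgt_out
      tgt_in := by simpa using p.src_out }
  invFun r :=
    { letters := r.letters.reverse
      ne := List.reverse_ne_nil_iff.2 r.ne
      chain := List.isChain_reverse.2 (r.chain.imp fun a b h => (Q.dual_idemArrow_chain_iff b a).1 h)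
      src_out := by simpa using r.tgt_in
      tgt_out := by simpa using r.src_in }
  left_inv p := CutArrow.ext _ (List.reverse_reverse _)
  right_inv r := IdemArrow.ext _ (List.reverse_reverse _)

def idemArrowEquivDualCutArrow : Q.IdemArrow supp ≃ Q.dual.CutArrow suppᶜ where
  toFun p :=
    { letters := p.letters.reverse
      ne := List.reverse_ne_nil_iff.2 p.ne
      chain := List.isChain_reverse.2 (p.chain.imp fun a b h => (Q.dual_cutArrow_chain_iff a b).2 h)
      src_out := by simpa using p.tgt_in
      tgt_out := by simpa using p.src_in }
  invFun r :=
    { letters := r.letters.reverse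
      ne := List.reverse_ne_nil_iff.2 r.ne
      chain := List.isChain_reverse.2 (r.chain.imp fun a b h => (Q.dual_cutArrow_chain_iff b a).1 h)
      src_in := by simpa using r.tgt_out
      tgt_in := by simpa using r.src_out }
  left_inv p := IdemArrow.ext _ (List.reverse_reverse _)
  right_inv r := CutArrow.ext _ (List.reverse_reverse _)

def dualCutIso : Iso (Q.cut supp).dual (Q.dual.idem suppᶜ) where
  vEquiv := Equiv.refl _
  eEquiv := Q.cutArrowEquivDualIdemArrow supp
  map_src p := by ext; simp [cutArrowEquivDualIdemArrow]
  map_tgt p := by ext; simp [cutArrowEquivDualIdemArrow]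
  map_deg p := by
    simp [cutArrowEquivDualIdemArrow, List.map_reverse, List.sum_map_one_sub]
  map_rel a b := by simp [cutArrowEquivDualIdemArrow, Subtype.ext_iff]

def dualIdemIso : Iso (Q.idem supp).dual (Q.dual.cut suppᶜ) where
  vEquiv := Equiv.subtypeEquivRight fun _ => Set.notMem_compl_iff.symm
  eEquiv := Q.idemArrowEquivDualCutArrow supp
  map_src p := by ext; simp [idemArrowEquivDualCutArrow]
  map_tgt p := by ext; simp [idemArrowEquivDualCutArrow]
  map_deg p := by
    simp [idemArrowEquivDualCutArrow, List.map_reverse, List.sum_map_one_sub]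
    ring
  map_rel a b := by simp [idemArrowEquivDualCutArrow, Subtype.ext_iff]

end QuadData

/-- Let `A = kQ/I` be a graded quadratic monomial algebra and `e` a
sum of vertex idempotents with support `supp` (so `1 - e` has support `suppᶜ`).  Then
there are isomorphisms of dg algebras
`A_e ≅ ((1-e) A^! (1-e))^!` and `eAe ≅ ((A^!)_{1-e})^!`. -/
theorem cut_and_idem_via_quadratic_dual (Q : QuadData) (supp : Set Q.V) :
    Nonempty (QuadData.Iso (Q.cut supp) ((Q.dual.idem suppᶜ).dual)) ∧
    Nonempty (QuadData.Iso (Q.idem supp) ((Q.dual.cut suppᶜ).dual)) :=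
  ⟨⟨(Q.cut supp).isoDualDual.trans (Q.dualCutIso supp).dual⟩,
    ⟨(Q.idem supp).isoDualDual.trans (Q.dualIdemIso supp).dual⟩⟩
end

section
/- Let A = kQ/I be a graded gentle algebra that is homologically smooth and proper, and let e be a sum of vertex idempotents. Then eAe is homologically smooth if and only if A_e is proper. -/
universe w

/-!
Call a junction `ab` of consecutive arrows on a cyclic path of `Q` *closed* if `ab ∈ I` and
the junction vertex lies in `supp`, and *open* if `ab ∉ I` and it lies outside `supp`. An arrow
of `eAe` is a run of open junctions and an arrow of `A_e` a run of closed ones; in a cycle of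
`eAe` all of whose consecutive pairs are relations the arrows meet at closed junctions, and in a
relation-free cycle of `A_e` at open ones. So both kinds of cycles unfold to cycles of `Q` all of
whose junctions are open or closed; conversely, such a mixed cycle regroups into a cycle of the
first kind if it has a closed junction, and into one of the second kind if it has an open one.
Smoothness of `A` excludes cycles with only closed junctions and properness those with only open
ones, so both sides of the equivalence say that there is no mixed cycle at all.
-/

namespace List

variable {α : Type*}

def Junction (R : α → α → Prop) (l₁ l₂ : List α) : Prop :=
  ∀ x ∈ l₁.getLast?, ∀ y ∈ l₂.head?, R x y

theorem junction_iff {R : α → α → Prop} {l₁ l₂ : List α} (h₁ : l₁ ≠ []) (h₂ : l₂ ≠ []) :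
    Junction R l₁ l₂ ↔ R (l₁.getLast h₁) (l₂.head h₂) := by
  simp [Junction, getLast?_eq_some_getLast h₁, head?_eq_some_head h₂]

theorem isChain_and_iff {R S : α → α → Prop} {l : List α} :
    l.IsChain (fun a b => R a b ∧ S a b) ↔ l.IsChain R ∧ l.IsChain S := by
  refine ⟨fun h => ⟨h.imp fun _ _ => And.left, h.imp fun _ _ => And.right⟩, fun ⟨hR, hS⟩ => ?_⟩
  simp only [isChain_iff_forall_rel_of_append_cons_cons] at hR hS ⊢
  exact fun _ _ _ _ hl => ⟨hR hl, hS hl⟩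

end List

namespace Cycle

variable {α β : Type*} {r : α → α → Prop}

theorem chain_coe_iff {l : List α} (hl : l ≠ []) :
    Chain r l ↔ l.IsChain r ∧ r (l.getLast hl) (l.head hl) := by
  obtain ⟨a, t, rfl⟩ := List.exists_cons_of_ne_nil hl
  rw [chain_ne_nil r hl, List.isChain_cons_cons, and_comm]
  rfl

theorem Chain.exists_rel_left_and_right {l : List α} (h : Chain r l) {a : α} (ha : a ∈ l) :
    (∃ b ∈ l, r b a) ∧ ∃ b ∈ l, r a b := by
  obtain ⟨u, t, rfl⟩ := List.append_of_mem ha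
  have hrot : ((u ++ a :: t : List α) : Cycle α) = (a :: (t ++ u) : List α) :=
    coe_eq_coe.2 <| by simpa using List.isRotated_append (l := u) (l' := a :: t)
  rw [hrot, chain_coe_cons] at h
  constructor
  · have h' : (a :: (t ++ u) ++ [a]).IsChain r := by simpa using h
    obtain ⟨-, -, hlast⟩ := List.isChain_append.1 h'
    refine ⟨(a :: (t ++ u)).getLast (List.cons_ne_nil _ _), ?_,
      hlast _ (List.getLast?_eq_some_getLast _) _ rfl⟩
    have := List.getLast_mem (List.cons_ne_nil a (t ++ u))
    simp only [List.mem_cons, List.mem_append] at this ⊢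
    tauto
  · obtain ⟨b, hb⟩ : ∃ b, (t ++ u ++ [a]).head? = some b := Option.isSome_iff_exists.1 (by simp)
    refine ⟨b, ?_, (List.isChain_cons.1 h).1 b hb⟩
    have := List.mem_of_mem_head? hb
    simp only [List.mem_append, List.mem_cons] at this ⊢
    tauto

theorem Chain.attach_map {r' : β → β → Prop} {l : List α} (h : Chain r l)
    (f : {x // x ∈ l} → β) (hf : ∀ x y, r x.1 y.1 → r' (f x) (f y)) :
    Chain r' (l.attach.map f) := by
  rw [← map_coe, chain_map]
  rw [← List.attach_map_subtype_val l, ← map_coe, chain_map] at h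
  exact h.imp hf

theorem exists_coe_eq_not_rel {l : List α} (hl : l ≠ []) (h : ¬ Chain r l) :
    ∃ (m : List α) (hm : m ≠ []), (m : Cycle α) = l ∧ ¬ r (m.getLast hm) (m.head hm) := by
  rw [chain_coe_iff hl, not_and'] at h
  by_cases hw : r (l.getLast hl) (l.head hl)
  · obtain ⟨a, b, u, t, rfl, hab⟩ : ∃ a b u t, l = u ++ a :: b :: t ∧ ¬ r a b := by
      simpa [List.isChain_iff_forall_rel_of_append_cons_cons] using h hw
    refine ⟨b :: t ++ (u ++ [a]), by simp, coe_eq_coe.2 ?_, by simpa using hab⟩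
    simpa using (List.isRotated_append (l := u ++ [a]) (l' := b :: t)).symm
  · exact ⟨l, hl, rfl, hw⟩

theorem chain_flatten {L : List (List α)} (hL : [] ∉ L) (hr : ∀ l ∈ L, l.IsChain r)
    (hJ : Chain (List.Junction r) L) : Chain r L.flatten := by
  rcases eq_or_ne L [] with rfl | hne
  · exact Chain.nil r
  have hlast : L.getLast hne ≠ [] := fun h => hL (h ▸ List.getLast_mem hne)
  have hhead : L.head hne ≠ [] := fun h => hL (h ▸ List.head_mem hne)
  rw [chain_coe_iff hne, List.junction_iff hlast hhead] at hJ
  rw [chain_coe_iff (List.flatten_ne_nil_iff.2 ⟨_, List.head_mem hne, hhead⟩),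
    ← List.getLast_getLast_eq_getLast_flatten hne hlast,
    ← List.head_head_eq_head_flatten hne hhead]
  exact ⟨(List.isChain_flatten hL).2 ⟨hr, hJ.1⟩, hJ.2⟩

theorem exists_chain_junction_of_not_chain {P S : α → α → Prop} {l : List α} (hl : l ≠ [])
    (h : Chain (P ⊔ S) l) (hP : ¬ Chain P l) :
    ∃ L : List (List α), L ≠ [] ∧ [] ∉ L ∧ (∀ m ∈ L, m.IsChain P) ∧ Chain (List.Junction S) L := by
  classical
  obtain ⟨m, hm, hml, hwrap⟩ := exists_coe_eq_not_rel hl hP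
  rw [← hml, chain_coe_iff hm] at h
  set L := m.splitBy (fun a b => decide (P a b))
  have hne : L ≠ [] := List.splitBy_ne_nil.2 hm
  have hnil : [] ∉ L := List.nil_notMem_splitBy _ m
  refine ⟨L, hne, hnil, fun x hx => by simpa using List.isChain_of_mem_splitBy hx,
    (chain_coe_iff hne).2 ⟨?_, ?_⟩⟩
  · have hPS := ((List.isChain_flatten hnil).1 (by rw [List.flatten_splitBy]; exact h.1)).2
    refine List.isChain_iff_forall_rel_of_append_cons_cons.2 fun x y u t hL => ?_
    obtain ⟨hx, hy, hxy⟩ := List.isChain_iff_forall_rel_of_append_cons_cons.1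
      (List.isChain_getLast_head_splitBy _ m) hL
    have hPSxy := (List.junction_iff hx hy).1
      (List.isChain_iff_forall_rel_of_append_cons_cons.1 hPS hL)
    rw [List.junction_iff hx hy]
    exact Or.resolve_left hPSxy (by simpa using hxy)
  · rw [List.junction_iff (List.ne_nil_of_mem_splitBy (List.getLast_mem hne))
      (List.ne_nil_of_mem_splitBy (List.head_mem hne)), List.getLast_getLast_splitBy _ hm,
      List.head_head_splitBy _ hm]
    exact Or.resolve_left h.2 hwrap

theorem Chain.exists_junction_head_and_getLast {S : α → α → Prop} {L : List (List α)}
    (hL : [] ∉ L) (hJ : Chain (List.Junction S) L) {l : List α} (hl : l ∈ L) (hne : l ≠ []) :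
    (∃ a, S a (l.head hne)) ∧ ∃ b, S (l.getLast hne) b := by
  obtain ⟨⟨k, hk, hkl⟩, ⟨m, hm, hlm⟩⟩ := hJ.exists_rel_left_and_right hl
  have hk' : k ≠ [] := fun h => hL (h ▸ hk)
  have hm' : m ≠ [] := fun h => hL (h ▸ hm)
  exact ⟨⟨_, (List.junction_iff hk' hne).1 hkl⟩, ⟨_, (List.junction_iff hne hm').1 hlm⟩⟩

end Cycle

namespace QuadData

variable (Q : QuadData) {supp : Set Q.V}

theorem relCycle_iff : Q.RelCycle ↔ ∃ l : List Q.E, l ≠ [] ∧ Cycle.Chain Q.rel l :=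
  ⟨fun ⟨l, hl, h⟩ => ⟨l, hl, (Cycle.chain_coe_iff hl).2 h⟩,
    fun ⟨l, hl, h⟩ => ⟨l, hl, (Cycle.chain_coe_iff hl).1 h⟩⟩

theorem relFreeCycle_iff : Q.RelFreeCycle ↔ ∃ l : List Q.E, l ≠ [] ∧
    Cycle.Chain (fun a b => Q.tgt a = Q.src b ∧ ¬ Q.rel a b) l := by
  refine exists_congr fun l => ⟨fun ⟨hl, hc, ha, ht, hr⟩ => ⟨hl, ?_⟩, fun ⟨hl, h⟩ => ⟨hl, ?_⟩⟩
  · exact (Cycle.chain_coe_iff hl).2 ⟨List.isChain_and_iff.2 ⟨hc, ha⟩, ht, hr⟩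
  · obtain ⟨hc, ht, hr⟩ := (Cycle.chain_coe_iff hl).1 h
    rw [List.isChain_and_iff] at hc
    exact ⟨hc.1, hc.2, ht, hr⟩

variable (supp) in
def Closed (a b : Q.E) : Prop := Q.rel a b ∧ Q.src b ∈ supp

variable (supp) in
def Open (a b : Q.E) : Prop := Q.tgt a = Q.src b ∧ ¬ Q.rel a b ∧ Q.src b ∉ supp

theorem not_chain_closed (hs : Q.SmoothP) {w : List Q.E} (hw : w ≠ []) :
    ¬ Cycle.Chain (Q.Closed supp) w :=
  fun h => hs <| Q.relCycle_iff.2 ⟨w, hw, h.imp fun _ _ => And.left⟩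

theorem not_chain_open (hp : Q.ProperP) {w : List Q.E} (hw : w ≠ []) :
    ¬ Cycle.Chain (Q.Open supp) w :=
  fun h => hp <| Q.relFreeCycle_iff.2 ⟨w, hw, h.imp fun _ _ h => ⟨h.1, h.2.1⟩⟩

theorem exists_chain_of_idem_relCycle (h : (Q.idem supp).RelCycle) :
    ∃ w : List Q.E, w ≠ [] ∧ Cycle.Chain (Q.Closed supp ⊔ Q.Open supp) w := by
  obtain ⟨l, hl, hc⟩ := (Q.idem supp).relCycle_iff.1 h
  have hnil : [] ∉ l.map IdemArrow.letters := by simpa using fun p _ => p.ne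
  refine ⟨(l.map IdemArrow.letters).flatten, ?_, Cycle.chain_flatten hnil ?_ ?_⟩
  · obtain ⟨p, hp⟩ := List.exists_mem_of_ne_nil l hl
    exact List.flatten_ne_nil_iff.2 ⟨_, List.mem_map_of_mem hp, p.ne⟩
  · simpa using fun p _ => p.chain.imp fun _ _ => Or.inr
  · rw [← Cycle.map_coe, Cycle.chain_map]
    exact hc.imp fun p q hpq => (List.junction_iff p.ne q.ne).2 (Or.inl ⟨hpq, q.src_in⟩)

theorem exists_chain_of_cut_relFreeCycle (h : (Q.cut supp).RelFreeCycle) :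
    ∃ w : List Q.E, w ≠ [] ∧ Cycle.Chain (Q.Closed supp ⊔ Q.Open supp) w := by
  obtain ⟨l, hl, hc⟩ := (Q.cut supp).relFreeCycle_iff.1 h
  have hnil : [] ∉ l.map CutArrow.letters := by simpa using fun p _ => p.ne
  refine ⟨(l.map CutArrow.letters).flatten, ?_, Cycle.chain_flatten hnil ?_ ?_⟩
  · obtain ⟨p, hp⟩ := List.exists_mem_of_ne_nil l hl
    exact List.flatten_ne_nil_iff.2 ⟨_, List.mem_map_of_mem hp, p.ne⟩
  · simpa using fun p _ => p.chain.imp fun _ _ => Or.inl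
  · rw [← Cycle.map_coe, Cycle.chain_map]
    exact hc.imp fun p q hpq => (List.junction_iff p.ne q.ne).2
      (Or.inr ⟨congrArg Subtype.val hpq.1, hpq.2, q.src_out⟩)

theorem idem_relCycle_of_chain {w : List Q.E} (hw : w ≠ [])
    (h : Cycle.Chain (Q.Closed supp ⊔ Q.Open supp) w) (hn : ¬ Cycle.Chain (Q.Open supp) w) :
    (Q.idem supp).RelCycle := by
  obtain ⟨L, hL, hnil, hrun, hJ⟩ :=
    Cycle.exists_chain_junction_of_not_chain hw (sup_comm (Q.Closed supp) _ ▸ h) hn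
  have hne : ∀ l ∈ L, l ≠ [] := fun l hl h => hnil (h ▸ hl)
  let F : {l // l ∈ L} → Q.IdemArrow supp := fun l =>
    have hends := hJ.exists_junction_head_and_getLast hnil l.2 (hne l l.2)
    { letters := l
      ne := hne l l.2
      chain := hrun l l.2
      src_in := hends.1.choose_spec.2
      tgt_in := Q.rel_comp _ _ hends.2.choose_spec.1 ▸ hends.2.choose_spec.2 }
  refine (Q.idem supp).relCycle_iff.2 ⟨L.attach.map F, by simpa using hL, hJ.attach_map F ?_⟩
  exact fun l m hlm => ((List.junction_iff (hne l l.2) (hne m m.2)).1 hlm).1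

theorem cut_relFreeCycle_of_chain {w : List Q.E} (hw : w ≠ [])
    (h : Cycle.Chain (Q.Closed supp ⊔ Q.Open supp) w) (hn : ¬ Cycle.Chain (Q.Closed supp) w) :
    (Q.cut supp).RelFreeCycle := by
  obtain ⟨L, hL, hnil, hrun, hJ⟩ := Cycle.exists_chain_junction_of_not_chain hw h hn
  have hne : ∀ l ∈ L, l ≠ [] := fun l hl h => hnil (h ▸ hl)
  let F : {l // l ∈ L} → Q.CutArrow supp := fun l =>
    have hends := hJ.exists_junction_head_and_getLast hnil l.2 (hne l l.2)
    { letters := l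
      ne := hne l l.2
      chain := hrun l l.2
      src_out := hends.1.choose_spec.2.2
      tgt_out := hends.2.choose_spec.1 ▸ hends.2.choose_spec.2.2 }
  refine (Q.cut supp).relFreeCycle_iff.2 ⟨L.attach.map F, by simpa using hL, hJ.attach_map F ?_⟩
  intro l m hlm
  obtain ⟨htgt, hrel, -⟩ := (List.junction_iff (hne l l.2) (hne m m.2)).1 hlm
  exact ⟨Subtype.ext htgt, hrel⟩

end QuadData

theorem idem_smooth_iff_cut_proper_general (Q : QuadData)
    (hs : Q.SmoothP) (hp : Q.ProperP) (supp : Set Q.V) :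
    (Q.idem supp).SmoothP ↔ (Q.cut supp).ProperP := by
  refine not_congr ⟨fun h => ?_, fun h => ?_⟩
  · obtain ⟨w, hw, hc⟩ := Q.exists_chain_of_idem_relCycle h
    exact Q.cut_relFreeCycle_of_chain hw hc (Q.not_chain_closed hs hw)
  · obtain ⟨w, hw, hc⟩ := Q.exists_chain_of_cut_relFreeCycle h
    exact Q.idem_relCycle_of_chain hw hc (Q.not_chain_open hp hw)

/-- Let `A = kQ/I` be a graded gentle algebra which is
homologically smooth and proper, `e` a sum of vertex idempotents with support `supp`.
Then `eAe` is homologically smooth if and only if `A_e` is proper (using the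
combinatorial characterisations of smoothness and properness). -/
theorem idem_smooth_iff_cut_proper (Q : QuadData) (hg : Q.IsGentle)
    (hs : Q.SmoothP) (hp : Q.ProperP) (supp : Set Q.V) :
    (Q.idem supp).SmoothP ↔ (Q.cut supp).ProperP :=
  idem_smooth_iff_cut_proper_general Q hs hp supp
end
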